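/- Let T > 0, θ > 0, c ≥ 1 and β ∈ (0,θ). (a) Every continuous function Y:[0,T]→[0,∞) with Y(T)=0, Y(t)>0 for all t∈[0,T), differentiable on [0,T) with Y'(t) = −θ² (c + β√(T−t)/√(Y(t)))^{−2}, satisfies √(Y(t)) ≤ (θ²/(4cβ))·√(T−t) for all t∈[0,T). (b) If β = θ/2, then Ȳ(t) = (θ/(2c))²·(T−t) is such a solution and it is maximal: every solution Y as in (a) satisfies Y(t) ≤ Ȳ(t) for all t∈[0,T]. -/

import Mathlib

open MeasureTheory Set Filter Topology

/-- A positive solution on `[0,T)` of the backward ODE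
`Y'(t) = −θ² (c + β√(T−t)/√(Y(t)))⁻²` with `Y(T) = 0`. -/
def Sol19 (T θ c β : ℝ) (Y : ℝ → ℝ) : Prop :=
  ContinuousOn Y (Set.Icc 0 T) ∧ Y T = 0 ∧ (∀ t ∈ Set.Ico 0 T, 0 < Y t) ∧
    ∀ t ∈ Set.Ico 0 T,
      HasDerivWithinAt Y
        (-(θ ^ 2 * ((c + β * Real.sqrt (T - t) / Real.sqrt (Y t)) ^ 2)⁻¹))
        (Set.Ico 0 T) t

/-! Write `K = θ²/(4cβ)` and `u = β√(T-t)/√Y`. Since `(c+u)² ≥ 4cu`, a bound `√Y ≤ M√(T-t)`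
gives `u ≥ β/M`, hence `Y' ≥ -KM`, and integrating back from `Y(T) = 0` improves the bound to
`√Y ≤ √(KM)·√(T-t)`. Starting from the crude bound `M = θ/c` (from `u ≥ 0`), the iterates of
`M ↦ √(KM)` converge to `K`, and the admissible constants form a closed set, so `M = K` is
admissible. For `β = θ/2` one checks that `u ≡ c` along `Ȳ`, so `Ȳ` is a solution, and `K = θ/(2c)`. -/

theorem le_mul_sub_of_hasDerivWithinAt_ge {a T L : ℝ} {Y f : ℝ → ℝ}
    (hcont : ContinuousOn Y (Icc a T)) (hYT : Y T = 0)
    (hderiv : ∀ t ∈ Ico a T, HasDerivWithinAt Y (f t) (Ico a T) t)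
    (hf : ∀ t ∈ Ico a T, -L ≤ f t) :
    ∀ t ∈ Icc a T, Y t ≤ L * (T - t) := by
  have hderivAt : ∀ t ∈ interior (Icc a T), HasDerivAt Y (f t) t := by
    intro t ht
    rw [interior_Icc] at ht
    exact (hderiv t (Ioo_subset_Ico_self ht)).hasDerivAt (Ico_mem_nhds ht.1 ht.2)
  intro t ht
  have h := (convex_Icc a T).mul_sub_le_image_sub_of_le_deriv hcont
    (fun s hs => (hderivAt s hs).differentiableAt.differentiableWithinAt)
    (fun s hs => (hderivAt s hs).deriv ▸ hf s (by
      rw [interior_Icc] at hs; exact Ioo_subset_Ico_self hs))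
    t ht T (right_mem_Icc.2 (ht.1.trans ht.2)) ht.2
  linarith

theorem mem_of_isClosed_of_sqrt_mul_mem {S : Set ℝ} (hS : IsClosed S) {K M₀ : ℝ} (hK : 0 < K)
    (hM₀ : 0 < M₀) (h₀ : M₀ ∈ S) (hstep : ∀ M ∈ S, 0 < M → √(K * M) ∈ S) : K ∈ S := by
  set r := M₀ / K
  have hr : 0 < r := div_pos hM₀ hK
  -- the `n`-th iterate of `M ↦ √(KM)` from `M₀` is `K r ^ (1/2)ⁿ`
  let M : ℕ → ℝ := fun n => K * r ^ ((1 / 2 : ℝ) ^ n)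
  have hM : ∀ n, M n ∈ S := by
    intro n
    induction n with
    | zero => simpa [M, r, mul_div_cancel₀ _ hK.ne'] using h₀
    | succ n ih =>
      convert hstep _ ih (by positivity) using 1
      rw [show K * M n = K ^ 2 * r ^ ((1 / 2 : ℝ) ^ n) by ring, Real.sqrt_mul (by positivity),
        Real.sqrt_sq hK.le, Real.sqrt_eq_rpow, ← Real.rpow_mul hr.le, ← pow_succ]
  have hlim : Tendsto M atTop (𝓝 K) := by
    have hexp : Tendsto (fun n : ℕ => (1 / 2 : ℝ) ^ n) atTop (𝓝 0) :=
      tendsto_pow_atTop_nhds_zero_of_lt_one (by norm_num) (by norm_num)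
    have := ((Real.continuousAt_const_rpow hr.ne').tendsto.comp hexp).const_mul K
    simpa [M] using this
  exact hS.mem_of_tendsto hlim (Eventually.of_forall hM)

namespace Sol19

variable {T θ c β : ℝ} {Y : ℝ → ℝ}

theorem le_mul_sub_of_rhs_le (hY : Sol19 T θ c β Y) {L : ℝ}
    (hL : ∀ t ∈ Ico 0 T, θ ^ 2 * ((c + β * √(T - t) / √(Y t)) ^ 2)⁻¹ ≤ L) :
    ∀ t ∈ Icc 0 T, Y t ≤ L * (T - t) :=
  le_mul_sub_of_hasDerivWithinAt_ge hY.1 hY.2.1 hY.2.2.2 fun t ht => neg_le_neg (hL t ht)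

theorem le_sq_div_mul (hY : Sol19 T θ c β Y) (hc : 0 < c) (hβ : 0 < β) :
    ∀ t ∈ Icc 0 T, Y t ≤ (θ / c) ^ 2 * (T - t) := by
  refine hY.le_mul_sub_of_rhs_le fun t _ => ?_
  have hu : 0 ≤ β * √(T - t) / √(Y t) := by positivity
  calc θ ^ 2 * ((c + β * √(T - t) / √(Y t)) ^ 2)⁻¹ ≤ θ ^ 2 * (c ^ 2)⁻¹ := by
        gcongr
        exact le_add_of_nonneg_right hu
    _ = (θ / c) ^ 2 := by ring

theorem le_mul_mul_sub_of_le_sq_mul (hY : Sol19 T θ c β Y) (hc : 0 < c) (hβ : 0 < β)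
    {M : ℝ} (hM : 0 < M) (hbound : ∀ t ∈ Ico 0 T, Y t ≤ M ^ 2 * (T - t)) :
    ∀ t ∈ Icc 0 T, Y t ≤ θ ^ 2 / (4 * c * β) * M * (T - t) := by
  refine hY.le_mul_sub_of_rhs_le fun t ht => ?_
  have hsY : 0 < √(Y t) := Real.sqrt_pos.2 (hY.2.2.1 t ht)
  have hsT : 0 < √(T - t) := Real.sqrt_pos.2 (sub_pos.2 ht.2)
  have hsqrt : √(Y t) ≤ M * √(T - t) := by
    rw [Real.sqrt_le_left (by positivity), mul_pow, Real.sq_sqrt (sub_pos.2 ht.2).le]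
    exact hbound t ht
  have hu : β / M ≤ β * √(T - t) / √(Y t) := by
    rw [div_le_div_iff₀ hM hsY]
    nlinarith
  calc θ ^ 2 * ((c + β * √(T - t) / √(Y t)) ^ 2)⁻¹
      ≤ θ ^ 2 * (4 * c * (β * √(T - t) / √(Y t)))⁻¹ := by
        gcongr
        exact four_mul_le_sq_add c _
    _ ≤ θ ^ 2 * (4 * c * (β / M))⁻¹ := by gcongr
    _ = θ ^ 2 / (4 * c * β) * M := by field_simp

theorem le_sq_mul_sub (hY : Sol19 T θ c β Y) (hθ : 0 < θ) (hc : 0 < c) (hβ : 0 < β) :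
    ∀ t ∈ Icc 0 T, Y t ≤ (θ ^ 2 / (4 * c * β)) ^ 2 * (T - t) := by
  set S := {M : ℝ | ∀ t ∈ Ico 0 T, Y t ≤ M ^ 2 * (T - t)}
  have hS : IsClosed S := by
    simp only [S, ofPred_forall]
    exact isClosed_biInter fun t _ => isClosed_le continuous_const (by fun_prop)
  have hK : θ ^ 2 / (4 * c * β) ∈ S := by
    refine mem_of_isClosed_of_sqrt_mul_mem hS (by positivity) (div_pos hθ hc)
      (fun t ht => hY.le_sq_div_mul hc hβ t (Ico_subset_Icc_self ht)) fun M hM hM₀ t ht => ?_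
    rw [Real.sq_sqrt (by positivity)]
    exact hY.le_mul_mul_sub_of_le_sq_mul hc hβ hM₀ hM t (Ico_subset_Icc_self ht)
  intro t ht
  rcases ht.2.eq_or_lt with rfl | hlt
  · simp [hY.2.1]
  · exact hK t ⟨ht.1, hlt⟩

end Sol19

theorem sol19_linear (T θ c : ℝ) (hθ : 0 < θ) (hc : 0 < c) :
    Sol19 T θ c (θ / 2) (fun t => (θ / (2 * c)) ^ 2 * (T - t)) := by
  refine ⟨by fun_prop, by simp, fun t ht => ?_, fun t ht => ?_⟩
  · have := sub_pos.2 ht.2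
    positivity
  · have hsT : 0 < √(T - t) := Real.sqrt_pos.2 (sub_pos.2 ht.2)
    have hu : θ / 2 * √(T - t) / √((θ / (2 * c)) ^ 2 * (T - t)) = c := by
      rw [Real.sqrt_mul (by positivity), Real.sqrt_sq (by positivity)]
      field_simp
    have hd : HasDerivAt (fun s => (θ / (2 * c)) ^ 2 * (T - s)) (-(θ / (2 * c)) ^ 2) t := by
      simpa using ((hasDerivAt_id t).const_sub T).const_mul ((θ / (2 * c)) ^ 2)
    refine hd.hasDerivWithinAt.congr_deriv ?_
    beta_reduce
    rw [hu]
    field_simp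
    ring

theorem stmt19_general (T θ c β : ℝ) (hc : 1 ≤ c)
    (hβ : β ∈ Set.Ioo 0 θ) :
    (∀ Y : ℝ → ℝ, Sol19 T θ c β Y → ∀ t ∈ Set.Ico 0 T,
        Real.sqrt (Y t) ≤ θ ^ 2 / (4 * c * β) * Real.sqrt (T - t)) ∧
    (β = θ / 2 →
      Sol19 T θ c β (fun t => (θ / (2 * c)) ^ 2 * (T - t)) ∧
      ∀ Y : ℝ → ℝ, Sol19 T θ c β Y →
        ∀ t ∈ Set.Icc 0 T, Y t ≤ (θ / (2 * c)) ^ 2 * (T - t)) := by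
  obtain ⟨hβ₀, hβθ⟩ := hβ
  have hθ : 0 < θ := hβ₀.trans hβθ
  have hc₀ : 0 < c := one_pos.trans_le hc
  refine ⟨fun Y hY t ht => ?_, fun hβeq => ⟨hβeq ▸ sol19_linear T θ c hθ hc₀, fun Y hY t ht => ?_⟩⟩
  · have hTt : 0 ≤ T - t := sub_nonneg.2 ht.2.le
    rw [Real.sqrt_le_left (by positivity), mul_pow, Real.sq_sqrt hTt]
    exact hY.le_sq_mul_sub hθ hc₀ hβ₀ t (Ico_subset_Icc_self ht)
  · have hK : θ ^ 2 / (4 * c * β) = θ / (2 * c) := by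
      rw [hβeq]
      field_simp
      ring
    simpa [hK] using hY.le_sq_mul_sub hθ hc₀ hβ₀ t ht

/-- (a) every positive solution `Y` of
`Y' = −θ²(c + β√(T−t)/√Y)⁻²`, `Y(T)=0`, satisfies
`√(Y(t)) ≤ (θ²/(4cβ))√(T−t)` on `[0,T)`; (b) if `β = θ/2`, then
`Ȳ(t) = (θ/(2c))²(T−t)` is such a solution and every solution satisfies
`Y ≤ Ȳ` on `[0,T]`. -/
theorem stmt19 (T θ c β : ℝ) (hT : 0 < T) (hθ : 0 < θ) (hc : 1 ≤ c)
    (hβ : β ∈ Set.Ioo 0 θ) :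
    (∀ Y : ℝ → ℝ, Sol19 T θ c β Y → ∀ t ∈ Set.Ico 0 T,
        Real.sqrt (Y t) ≤ θ ^ 2 / (4 * c * β) * Real.sqrt (T - t)) ∧
    (β = θ / 2 →
      Sol19 T θ c β (fun t => (θ / (2 * c)) ^ 2 * (T - t)) ∧
      ∀ Y : ℝ → ℝ, Sol19 T θ c β Y →
        ∀ t ∈ Set.Icc 0 T, Y t ≤ (θ / (2 * c)) ^ 2 * (T - t)) :=
  stmt19_general T θ c β hc hβ
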